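/- arXiv:2309.05554 — 5 statements merged into one kernel-verified Lean document; each statement's English description precedes it below -/
import Mathlib

section
/- If binary ({0,1}-valued) random variables X_1,...,X_n satisfy 1-negative association, then they satisfy weak negative regression: for any index i with 0 < P[X_i = 1] < 1 and any monotone non-decreasing function f of the remaining variables, E[f | X_i = 1] ≤ E[f | X_i = 0]. -/
open MeasureTheory ProbabilityTheory Real Finset

/-- A vector is binary if each coordinate is 0 or 1. -/
def BinaryVec {m : ℕ} (x : Fin m → ℝ) : Prop := ∀ i, x i = 0 ∨ x i = 1

/-- Monotone non-decreasing on the Boolean cube. -/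
def MonoCube {m : ℕ} (f : (Fin m → ℝ) → ℝ) : Prop :=
  ∀ x y : Fin m → ℝ, BinaryVec x → BinaryVec y → x ≤ y → f x ≤ f y

/-- Submodular on the Boolean cube: marginal gains are coordinatewise non-increasing. -/
def SubmodCube {m : ℕ} (f : (Fin m → ℝ) → ℝ) : Prop :=
  ∀ (i : Fin m) (x y : Fin m → ℝ), BinaryVec x → BinaryVec y → x ≤ y →
    f (Function.update y i 1) - f (Function.update y i 0) ≤
      f (Function.update x i 1) - f (Function.update x i 0)

/-- Supermodular on the Boolean cube: marginal gains are coordinatewise non-decreasing. -/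
def SupermodCube {m : ℕ} (f : (Fin m → ℝ) → ℝ) : Prop :=
  ∀ (i : Fin m) (x y : Fin m → ℝ), BinaryVec x → BinaryVec y → x ≤ y →
    f (Function.update x i 1) - f (Function.update x i 0) ≤
      f (Function.update y i 1) - f (Function.update y i 0)

/-- 1-negative association for binary random variables: for every coordinate `i`,
every monotone `F` depending only on coordinates `≠ i` and every monotone `G` of `X i`,
`E[F·G] ≤ E[F]·E[G]`. -/
def OneNA {Ω : Type*} [MeasurableSpace Ω] (μ : Measure Ω) {m : ℕ} (X : Fin m → Ω → ℝ) : Prop :=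
  ∀ (i : Fin m) (F : (Fin m → ℝ) → ℝ) (G : ℝ → ℝ),
    Measurable F → MonoCube F →
    (∀ x y : Fin m → ℝ, (∀ j, j ≠ i → x j = y j) → F x = F y) →
    Measurable G → Monotone G →
    ∫ ω, F (fun j => X j ω) * G (X i ω) ∂μ ≤
      (∫ ω, F (fun j => X j ω) ∂μ) * ∫ ω, G (X i ω) ∂μ

/-! Taking `G = id` in 1-negative association gives `E[f · X_i] ≤ E[f] · P[X_i = 1]`. As `X_i` is
the indicator of `{X_i = 1}`, the left side is `E[f; X_i = 1]`, and splitting `E[f]` over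
`{X_i = 1}` and its complement `{X_i = 0}` turns the inequality into
`E[f | X_i = 1] ≤ E[f | X_i = 0]`. Integrability is free: `f` takes finitely many values on the
cube. -/

section

variable {Ω : Type*}

lemma finite_range_of_binary {ι : Type*} [Finite ι] {X : ι → Ω → ℝ}
    (hbin : ∀ i ω, X i ω = 0 ∨ X i ω = 1) : (Set.range fun ω i => X i ω).Finite := by
  refine (Set.Finite.pi fun _ => Set.toFinite ({0, 1} : Set ℝ)).subset ?_
  rintro _ ⟨ω, rfl⟩ i -
  exact hbin i ω

lemma preimage_zero_eq_compl_preimage_one {Y : Ω → ℝ} (hY : ∀ ω, Y ω = 0 ∨ Y ω = 1) :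
    Y ⁻¹' {0} = (Y ⁻¹' {1})ᶜ := by
  ext ω
  rcases hY ω with h | h <;> simp [h]

variable [MeasurableSpace Ω] {μ : Measure Ω}

lemma integrable_of_finite_range [IsFiniteMeasure μ] {E : Type*} [NormedAddCommGroup E]
    {F : Ω → E} (hF : AEStronglyMeasurable F μ) (hfin : (Set.range F).Finite) :
    Integrable F μ := by
  obtain ⟨C, hC⟩ := (hfin.image norm).bddAbove
  exact .of_bound hF C (ae_of_all _ fun ω => hC ⟨F ω, ⟨ω, rfl⟩, rfl⟩)

lemma integral_mul_eq_setIntegral_preimage_one {Y : Ω → ℝ} (hYm : Measurable Y)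
    (hY : ∀ ω, Y ω = 0 ∨ Y ω = 1) (F : Ω → ℝ) :
    ∫ ω, F ω * Y ω ∂μ = ∫ ω in Y ⁻¹' {1}, F ω ∂μ := by
  rw [← integral_indicator (hYm (measurableSet_singleton 1))]
  congr 1 with ω
  rcases hY ω with h | h <;> simp [h]

lemma integral_eq_measureReal_preimage_one {Y : Ω → ℝ} (hYm : Measurable Y)
    (hY : ∀ ω, Y ω = 0 ∨ Y ω = 1) : ∫ ω, Y ω ∂μ = μ.real (Y ⁻¹' {1}) := by
  simpa using integral_mul_eq_setIntegral_preimage_one (μ := μ) hYm hY 1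

lemma integral_cond_eq_inv_mul_setIntegral (s : Set Ω) (F : Ω → ℝ) :
    ∫ ω, F ω ∂μ[|s] = (μ.real s)⁻¹ * ∫ ω in s, F ω ∂μ := by
  rw [ProbabilityTheory.cond, integral_smul_measure, ENNReal.toReal_inv, smul_eq_mul]
  rfl

lemma integral_cond_le_integral_cond_compl [IsProbabilityMeasure μ] {s : Set Ω}
    (hs : MeasurableSet s) (hs₀ : 0 < μ s) (hs₁ : μ s < 1) {F : Ω → ℝ} (hF : Integrable F μ)
    (h : ∫ ω in s, F ω ∂μ ≤ (∫ ω, F ω ∂μ) * μ.real s) :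
    ∫ ω, F ω ∂μ[|s] ≤ ∫ ω, F ω ∂μ[|sᶜ] := by
  have hp : 0 < μ.real s := ENNReal.toReal_pos hs₀.ne' (measure_ne_top μ s)
  have hq : μ.real sᶜ = 1 - μ.real s := probReal_compl_eq_one_sub hs
  have hp₁ : μ.real s < 1 := ENNReal.toReal_lt_of_lt_ofReal (by simpa using hs₁)
  -- With `A, B` the integrals over `s, sᶜ` and `p = μ.real s`:
  -- `A ≤ (A + B) p  ↔  A (1 - p) ≤ B p  ↔  A / p ≤ B / (1 - p)`.
  rw [← integral_add_compl hs hF] at h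
  rw [integral_cond_eq_inv_mul_setIntegral, integral_cond_eq_inv_mul_setIntegral, hq,
    inv_mul_eq_div, inv_mul_eq_div, div_le_div_iff₀ hp (by linarith)]
  nlinarith

end

/-- For binary random variables, 1-negative association implies weak negative regression. -/
theorem oneNA_implies_wnr_binary {Ω : Type*} [MeasurableSpace Ω] (μ : Measure Ω)
    [IsProbabilityMeasure μ] {n : ℕ} (X : Fin n → Ω → ℝ) (hX : ∀ i, Measurable (X i))
    (hbin : ∀ i ω, X i ω = 0 ∨ X i ω = 1)
    (hNA : OneNA μ X) :
    ∀ (i : Fin n), 0 < μ (X i ⁻¹' {1}) → μ (X i ⁻¹' {1}) < 1 →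
      ∀ (f : (Fin n → ℝ) → ℝ), Measurable f → MonoCube f →
        (∀ x y : Fin n → ℝ, (∀ j, j ≠ i → x j = y j) → f x = f y) →
        ∫ ω, f (fun j => X j ω) ∂(μ[|X i ⁻¹' {1}]) ≤
          ∫ ω, f (fun j => X j ω) ∂(μ[|X i ⁻¹' {0}]) := by
  intro i hp₀ hp₁ f hfm hfmono hfdep
  have hFint : Integrable (fun ω => f fun j => X j ω) μ :=
    integrable_of_finite_range (hfm.comp (measurable_pi_lambda _ hX)).aestronglyMeasurable
      ((finite_range_of_binary hbin).image f |>.subset (Set.range_comp f _).le)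
  have hcov := hNA i f id hfm hfmono hfdep measurable_id monotone_id
  simp only [id_eq] at hcov
  rw [integral_mul_eq_setIntegral_preimage_one (hX i) (hbin i),
    integral_eq_measureReal_preimage_one (hX i) (hbin i)] at hcov
  rw [preimage_zero_eq_compl_preimage_one (hbin i)]
  exact integral_cond_le_integral_cond_compl (hX i (measurableSet_singleton 1)) hp₀ hp₁ hFint
    hcov
end

section
/- If f : {0,1}^n → ℝ is monotone non-decreasing and submodular and λ < 0, then the function (X_2,...,X_n) ↦ exp(λ·f(1,X_2,...,X_n)) − exp(λ·f(0,X_2,...,X_n)) is non-positive and monotone non-decreasing in (X_2,...,X_n) under the coordinatewise order on {0,1}^{n−1}. -/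
open MeasureTheory ProbabilityTheory Real Finset

lemma binary_update {m : ℕ} {x : Fin m → ℝ} (hx : BinaryVec x) (i : Fin m) (c : ℝ)
    (hc : c = 0 ∨ c = 1) : BinaryVec (Function.update x i c) := by
  intro j
  by_cases h : j = i
  · subst h; simp [hc]
  · simp [Function.update_of_ne h, hx j]

lemma update_le_update {m : ℕ} {x y : Fin m → ℝ} (hxy : x ≤ y) (i : Fin m) {c d : ℝ}
    (hcd : c ≤ d) : Function.update x i c ≤ Function.update y i d := by
  intro j
  by_cases h : j = i
  · subst h; simpa using hcd
  · simpa [Function.update_of_ne h] using hxy j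

lemma key_exp (l a b c d : ℝ) (hl : l < 0) (hac : a ≤ c) (hcd : c ≤ d)
    (hsub : d - c ≤ b - a) :
    Real.exp (l * b) - Real.exp (l * a) ≤ Real.exp (l * d) - Real.exp (l * c) := by
  have e1 : Real.exp (l * b) = Real.exp (l * a) * Real.exp (l * (b - a)) := by
    rw [← Real.exp_add]; ring_nf
  have e2 : Real.exp (l * d) = Real.exp (l * c) * Real.exp (l * (d - c)) := by
    rw [← Real.exp_add]; ring_nf
  rw [e1, e2]
  have h1 : Real.exp (l * (b - a)) ≤ Real.exp (l * (d - c)) := by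
    apply Real.exp_le_exp.2
    exact mul_le_mul_of_nonpos_left hsub hl.le
  have h2 : Real.exp (l * (d - c)) ≤ 1 := by
    rw [show (1:ℝ) = Real.exp 0 by simp]
    exact Real.exp_le_exp.2 (mul_nonpos_of_nonpos_of_nonneg hl.le (by linarith))
  have h3 : Real.exp (l * c) ≤ Real.exp (l * a) :=
    Real.exp_le_exp.2 (by nlinarith)
  have ea := Real.exp_pos (l * a)
  have ec := Real.exp_pos (l * c)
  nlinarith [Real.exp_pos (l * (b - a)), Real.exp_pos (l * (d - c))]

/-- For monotone submodular f and λ < 0, the function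
x ↦ exp(λ·f(x with xᵢ=1)) − exp(λ·f(x with xᵢ=0)) is non-positive and
monotone non-decreasing on the Boolean cube. -/
theorem submodular_exp_diff_nonpos_monotone {n : ℕ} (f : (Fin n → ℝ) → ℝ)
    (hmono : MonoCube f) (hsub : SubmodCube f) (l : ℝ) (hl : l < 0) (i : Fin n) :
    (∀ x : Fin n → ℝ, BinaryVec x →
      Real.exp (l * f (Function.update x i 1)) - Real.exp (l * f (Function.update x i 0)) ≤ 0) ∧
    (∀ x y : Fin n → ℝ, BinaryVec x → BinaryVec y → x ≤ y →
      Real.exp (l * f (Function.update x i 1)) - Real.exp (l * f (Function.update x i 0)) ≤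
        Real.exp (l * f (Function.update y i 1)) - Real.exp (l * f (Function.update y i 0))) := by
  constructor
  · intro x hx
    have h01 : f (Function.update x i 0) ≤ f (Function.update x i 1) :=
      hmono _ _ (binary_update hx i 0 (Or.inl rfl)) (binary_update hx i 1 (Or.inr rfl))
        (update_le_update le_rfl i (by norm_num))
    have := Real.exp_le_exp.2 (mul_le_mul_of_nonpos_left h01 hl.le)
    linarith
  · intro x y hx hy hxy
    exact key_exp l (f (Function.update x i 0)) (f (Function.update x i 1))
      (f (Function.update y i 0)) (f (Function.update y i 1)) hl
      (hmono _ _ (binary_update hx i 0 (Or.inl rfl)) (binary_update hy i 0 (Or.inl rfl))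
        (update_le_update hxy i le_rfl))
      (hmono _ _ (binary_update hy i 0 (Or.inl rfl)) (binary_update hy i 1 (Or.inr rfl))
        (update_le_update le_rfl i (by norm_num)))
      (hsub i x y hx hy hxy)
end

section
/- One-step decoupling: Let X_1,...,X_n be {0,1}-valued 1-negatively associated random variables, let f : {0,1}^n → ℝ be monotone non-decreasing and submodular, and let λ < 0. Let X_1* be independent of (X_2,...,X_n) with the same marginal distribution as X_1. Then E[exp(λ·f(X_1,X_2,...,X_n))] ≤ E[exp(λ·f(X_1*,X_2,...,X_n))]. -/
open MeasureTheory ProbabilityTheory Real Finset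

/-!
For binary `t`, `g (x[0 ↦ t]) = g (x[0 ↦ 0]) + t * ∂₀g x`, where the discrete derivative `∂₀g`
does not depend on `x 0`. For `f` monotone and submodular and `λ ≤ 0`, `g = exp (λ f)` is
supermodular, so `∂₀g` is monotone. Hence 1-negative association gives
`E[X₀ ∂₀g(X)] ≤ E[X₀] E[∂₀g(X)]`, while independence of `X₁*` and equality of marginals give
`E[X₁* ∂₀g(X)] = E[X₀] E[∂₀g(X)]`; the terms `E[g (X[0 ↦ 0])]` agree on both sides.
-/

def discreteDeriv {m : ℕ} (g : (Fin m → ℝ) → ℝ) (i : Fin m) (x : Fin m → ℝ) : ℝ :=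
  g (Function.update x i 1) - g (Function.update x i 0)

section Cube

variable {m : ℕ}

lemma BinaryVec.update {x : Fin m → ℝ} (hx : BinaryVec x) (i : Fin m) {c : ℝ}
    (hc : c = 0 ∨ c = 1) : BinaryVec (Function.update x i c) := by
  intro j
  rcases eq_or_ne j i with rfl | hj
  · simpa using hc
  · simpa [Function.update_of_ne hj] using hx j

lemma BinaryVec.exists_abs_le (F : (Fin m → ℝ) → ℝ) :
    ∃ C, ∀ x, BinaryVec x → |F x| ≤ C := by
  have hcube : {x : Fin m → ℝ | ∀ i, x i ∈ ({0, 1} : Set ℝ)}.Finite :=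
    Set.Finite.pi' fun _ => Set.toFinite _
  obtain ⟨C, hC⟩ := (hcube.image fun x => |F x|).exists_le
  exact ⟨C, fun x hx => hC _ ⟨x, fun i => hx i, rfl⟩⟩

lemma apply_update_eq_add_mul_discreteDeriv (g : (Fin m → ℝ) → ℝ) (i : Fin m)
    (x : Fin m → ℝ) {t : ℝ} (ht : t = 0 ∨ t = 1) :
    g (Function.update x i t) = g (Function.update x i 0) + t * discreteDeriv g i x := by
  rcases ht with rfl | rfl <;> simp [discreteDeriv]

lemma discreteDeriv_congr (g : (Fin m → ℝ) → ℝ) (i : Fin m) {x y : Fin m → ℝ}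
    (h : ∀ j, j ≠ i → x j = y j) : discreteDeriv g i x = discreteDeriv g i y := by
  have hupd : ∀ c : ℝ, Function.update x i c = Function.update y i c := fun c => by
    funext j
    rcases eq_or_ne j i with rfl | hj
    · simp
    · simp [Function.update_of_ne hj, h j hj]
  simp only [discreteDeriv, hupd]

lemma Measurable.discreteDeriv {g : (Fin m → ℝ) → ℝ} (hg : Measurable g) (i : Fin m) :
    Measurable (discreteDeriv g i) :=
  (hg.comp measurable_update_left).sub (hg.comp measurable_update_left)

lemma SupermodCube.monoCube_discreteDeriv {g : (Fin m → ℝ) → ℝ} (hg : SupermodCube g)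
    (i : Fin m) : MonoCube (discreteDeriv g i) :=
  hg i

/-- For `l ≤ 0`, `t ↦ exp (l t)` is convex and non-increasing, so its increment over `[a₀, a₁]` is
at most its increment over the shorter interval `[b₀, b₁]` further right. -/
lemma exp_mul_sub_exp_mul_le {l a₀ a₁ b₀ b₁ : ℝ} (hl : l ≤ 0) (hb : b₀ ≤ b₁) (hab : a₀ ≤ b₀)
    (hgap : b₁ - b₀ ≤ a₁ - a₀) :
    exp (l * a₁) - exp (l * a₀) ≤ exp (l * b₁) - exp (l * b₀) := by
  have hq : exp (l * (a₁ - a₀)) ≤ exp (l * (b₁ - b₀)) := by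
    gcongr exp ?_
    exact mul_le_mul_of_nonpos_left hgap hl
  have hq₁ : exp (l * (b₁ - b₀)) ≤ 1 := exp_le_one_iff.mpr (mul_nonpos_of_nonpos_of_nonneg hl
    (sub_nonneg.mpr hb))
  have hv : exp (l * b₀) ≤ exp (l * a₀) := by
    gcongr exp ?_
    exact mul_le_mul_of_nonpos_left hab hl
  calc exp (l * a₁) - exp (l * a₀) = exp (l * a₀) * (exp (l * (a₁ - a₀)) - 1) := by
        rw [mul_sub, ← exp_add]; ring_nf
    _ ≤ exp (l * a₀) * (exp (l * (b₁ - b₀)) - 1) := by gcongr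
    _ ≤ exp (l * b₀) * (exp (l * (b₁ - b₀)) - 1) :=
        mul_le_mul_of_nonpos_right hv (sub_nonpos.mpr hq₁)
    _ = exp (l * b₁) - exp (l * b₀) := by rw [mul_sub, ← exp_add]; ring_nf

lemma SubmodCube.supermodCube_exp_mul {f : (Fin m → ℝ) → ℝ} (hsub : SubmodCube f)
    (hmono : MonoCube f) {l : ℝ} (hl : l ≤ 0) : SupermodCube fun x => exp (l * f x) := by
  intro i x y hx hy hxy
  have hx₀ := hx.update i (Or.inl rfl)
  have hy₀ := hy.update i (Or.inl rfl)
  have hy₁ := hy.update i (Or.inr rfl)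
  exact exp_mul_sub_exp_mul_le hl
    (hmono _ _ hy₀ hy₁ (update_le_update_iff'.mpr zero_le_one))
    (hmono _ _ hx₀ hy₀ (update_le_update_iff.mpr ⟨le_rfl, fun j _ => hxy j⟩))
    (hsub i x y hx hy hxy)

end Cube

lemma integrable_comp_of_ae_binaryVec {Ω : Type*} [MeasurableSpace Ω] {μ : Measure Ω}
    [IsFiniteMeasure μ] {m : ℕ} {V : Ω → Fin m → ℝ} (hV : AEMeasurable V μ)
    (hbin : ∀ᵐ ω ∂μ, BinaryVec (V ω)) {F : (Fin m → ℝ) → ℝ} (hF : Measurable F) :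
    Integrable (fun ω => F (V ω)) μ := by
  obtain ⟨C, hC⟩ := BinaryVec.exists_abs_le F
  exact Integrable.of_bound (hF.comp_aemeasurable hV).aestronglyMeasurable C
    (hbin.mono fun ω hω => hC _ hω)

theorem SupermodCube.integral_le_integral_update_zero {Ω : Type*} [MeasurableSpace Ω]
    {μ : Measure Ω} [IsFiniteMeasure μ] {n : ℕ} {X : Fin (n + 1) → Ω → ℝ}
    (hX : ∀ i, Measurable (X i)) (hbin : ∀ᵐ ω ∂μ, BinaryVec fun j => X j ω)
    (hNA : OneNA μ X) {Y : Ω → ℝ} (hYindep : IndepFun Y (fun ω => fun j : Fin n => X j.succ ω) μ)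
    (hYmarg : IdentDistrib Y (X 0) μ μ) {g : (Fin (n + 1) → ℝ) → ℝ} (hg : Measurable g)
    (hsup : SupermodCube g) :
    ∫ ω, g (fun j => X j ω) ∂μ ≤ ∫ ω, g (Function.update (fun j => X j ω) 0 (Y ω)) ∂μ := by
  set V : Ω → Fin (n + 1) → ℝ := fun ω j => X j ω
  set D := discreteDeriv g 0
  have hV : AEMeasurable V μ := (measurable_pi_lambda _ hX).aemeasurable
  have hD : Measurable D := hg.discreteDeriv 0
  have hint {F : (Fin (n + 1) → ℝ) → ℝ} (hF : Measurable F) : Integrable (fun ω => F (V ω)) μ :=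
    integrable_comp_of_ae_binaryVec hV hbin hF
  have hA := hint (hg.comp (measurable_update_left (a := 0) (x := 0)))
  have hX₀ : Integrable (X 0) μ := hint (measurable_pi_apply 0)
  have hYD : IndepFun Y (fun ω => D (V ω)) μ := by
    have hcons : Measurable fun z : Fin n → ℝ => D (Fin.cons 0 z) :=
      hD.comp (continuous_const.finCons continuous_id).measurable
    refine (hYindep.comp measurable_id hcons).congr (ae_of_all _ fun _ => rfl)
      (ae_of_all _ fun ω => ?_)
    change D (Fin.cons 0 (Fin.tail (V ω))) = D (V ω)
    conv_rhs => rw [← Fin.cons_self_tail (V ω)]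
    refine discreteDeriv_congr g 0 fun j hj => ?_
    obtain ⟨k, rfl⟩ := Fin.exists_succ_eq.mpr hj
    simp only [Fin.cons_succ]
  have hNA₀ : ∫ ω, D (V ω) * X 0 ω ∂μ ≤ (∫ ω, D (V ω) ∂μ) * ∫ ω, X 0 ω ∂μ :=
    hNA 0 D id hD (hsup.monoCube_discreteDeriv 0) (fun _ _ => discreteDeriv_congr g 0)
      measurable_id monotone_id
  have hYbin : ∀ᵐ ω ∂μ, Y ω = 0 ∨ Y ω = 1 :=
    hYmarg.symm.ae_snd (p := fun y => y = 0 ∨ y = 1)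
      ((measurableSet_singleton 0).union (measurableSet_singleton 1)) (hbin.mono fun ω hω => hω 0)
  calc ∫ ω, g (V ω) ∂μ = ∫ ω, g (Function.update (V ω) 0 0) + X 0 ω * D (V ω) ∂μ := by
        refine integral_congr_ae (hbin.mono fun ω hω => ?_)
        convert apply_update_eq_add_mul_discreteDeriv g 0 (V ω) (hω 0) using 2
        exact (Function.update_eq_self 0 (V ω)).symm
    _ = (∫ ω, g (Function.update (V ω) 0 0) ∂μ) + ∫ ω, D (V ω) * X 0 ω ∂μ := by
        simp_rw [mul_comm (X 0 _)]
        exact integral_add hA (hint (hD.mul (measurable_pi_apply 0)))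
    _ ≤ (∫ ω, g (Function.update (V ω) 0 0) ∂μ) + (∫ ω, Y ω ∂μ) * ∫ ω, D (V ω) ∂μ := by
        rw [hYmarg.integral_eq, mul_comm]
        exact add_le_add_right hNA₀ _
    _ = ∫ ω, g (Function.update (V ω) 0 0) + Y ω * D (V ω) ∂μ := by
        rw [← hYD.integral_fun_mul_eq_mul_integral hYmarg.aemeasurable_fst.aestronglyMeasurable
          (hD.comp_aemeasurable hV).aestronglyMeasurable]
        exact (integral_add hA (hYD.integrable_mul (hYmarg.integrable_iff.mpr hX₀)
          (hint hD))).symm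
    _ = ∫ ω, g (Function.update (V ω) 0 (Y ω)) ∂μ :=
        integral_congr_ae (hYbin.mono fun ω hω =>
          (apply_update_eq_add_mul_discreteDeriv g 0 (V ω) hω).symm)

/-- One-step decoupling: replacing X₁ by an independent copy X₁* can only increase
the exponential moment E[exp(λ·f(X))] for monotone submodular f and λ < 0. -/
theorem one_step_decoupling {Ω : Type*} [MeasurableSpace Ω] (μ : Measure Ω)
    [IsProbabilityMeasure μ] {n : ℕ} (X : Fin (n + 1) → Ω → ℝ)
    (hX : ∀ i, Measurable (X i)) (hbin : ∀ i ω, X i ω = 0 ∨ X i ω = 1)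
    (hNA : OneNA μ X)
    (Y : Ω → ℝ) (hY : Measurable Y)
    (hYindep : IndepFun Y (fun ω => fun j : Fin n => X j.succ ω) μ)
    (hYmarg : Measure.map Y μ = Measure.map (X 0) μ)
    (f : (Fin (n + 1) → ℝ) → ℝ) (hfmeas : Measurable f)
    (hfmono : MonoCube f) (hfsub : SubmodCube f) (l : ℝ) (hl : l < 0) :
    ∫ ω, Real.exp (l * f (fun j => X j ω)) ∂μ ≤
      ∫ ω, Real.exp (l * f (Function.update (fun j => X j ω) 0 (Y ω))) ∂μ := by
  have hsup := hfsub.supermodCube_exp_mul hfmono hl.le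
  exact hsup.integral_le_integral_update_zero hX (ae_of_all _ fun ω i => hbin i ω) hNA hYindep
    ⟨hY.aemeasurable, (hX 0).aemeasurable, hYmarg⟩ (hfmeas.const_mul l).exp
end

section
/- Lower-tail Chernoff bound for submodular functions under 1-negative association: Let X_1,...,X_n be {0,1}-valued 1-negatively associated random variables with means x_1,...,x_n, let f : {0,1}^n → ℝ≥0 be monotone non-decreasing submodular with all marginal values in [0,1], let F be the multilinear extension of f, and set μ_0 = F(x_1,...,x_n). Then for all δ ∈ (0,1], Pr[f(X_1,...,X_n) ≤ (1−δ)·μ_0] ≤ exp(−μ_0·δ²/2). -/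
open MeasureTheory ProbabilityTheory Real Finset

/-!
Put `g = exp (-δ f)`. As `f` is monotone and submodular, `g` is supermodular, and so are its
partial multilinear extensions (averages over independent Bernoulli resamplings of some
coordinates). Hence the marginal of such an extension in a fresh coordinate `i` is monotone
and ignores `xᵢ`, so 1-negative association lets one resample `Xᵢ` independently without
decreasing the expectation; after all `n` coordinates, `E[g(X)] ≤ G(x)` for the multilinear
extension `G` of `g`. For independent coordinates, the chord bound
`exp (-δ a) ≤ 1 + a (exp (-δ) - 1)` on the marginal `a ∈ [0, 1]` together with Harris'
inequality gives `G(x) ≤ exp ((exp (-δ) - 1) μ₀)` by induction on the coordinates. The Chernoff bound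
(Markov for `exp (-δ f)`) and `exp (-δ) ≤ 1 - δ + δ² / 2` finish the proof.
-/

open Function

section BernoulliAverage

variable {n : ℕ}

def boolCube (n : ℕ) : Set (Fin n → ℝ) := {x | BinaryVec x}

lemma boolCube_finite : (boolCube n).Finite := by
  have : boolCube n = Set.univ.pi fun _ => {0, 1} := by
    ext x; simp [boolCube, BinaryVec, Set.mem_pi]
  exact this ▸ Set.Finite.pi fun _ => Set.toFinite _

lemma update_mem_boolCube {x : Fin n → ℝ} (hx : x ∈ boolCube n) (i : Fin n) {c : ℝ}
    (hc : c = 0 ∨ c = 1) : update x i c ∈ boolCube n := by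
  intro j
  rcases eq_or_ne j i with rfl | hj
  · simpa using hc
  · simpa [hj] using hx j

def marginal (g : (Fin n → ℝ) → ℝ) (i : Fin n) (x : Fin n → ℝ) : ℝ :=
  g (update x i 1) - g (update x i 0)

lemma marginal_eq_of_eq_off {g : (Fin n → ℝ) → ℝ} {i : Fin n} {x y : Fin n → ℝ}
    (h : ∀ j, j ≠ i → x j = y j) : marginal g i x = marginal g i y := by
  have key : ∀ c : ℝ, update x i c = update y i c := fun c => by
    ext j
    rcases eq_or_ne j i with rfl | hj
    · simp
    · simp [hj, h j hj]
  simp only [marginal, key]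

lemma SubmodCube.antitoneOn_marginal {f : (Fin n → ℝ) → ℝ} (h : SubmodCube f) (i : Fin n) :
    AntitoneOn (marginal f i) (boolCube n) :=
  fun x hx y hy => h i x y hx hy

lemma SupermodCube.monotoneOn_marginal {g : (Fin n → ℝ) → ℝ} (h : SupermodCube g)
    (i : Fin n) : MonotoneOn (marginal g i) (boolCube n) :=
  fun x hx y hy => h i x y hx hy

variable (p : Fin n → ℝ)

def bernoulliWeight (T S : Finset (Fin n)) : ℝ :=
  (∏ i ∈ S, p i) * ∏ i ∈ T \ S, (1 - p i)

def fillIndicator (T S : Finset (Fin n)) (x : Fin n → ℝ) : Fin n → ℝ :=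
  fun i => if i ∈ T then if i ∈ S then 1 else 0 else x i

/-- `bernoulliAvg p T g x` is `E[g Y]` for `Y i ~ Bernoulli (p i)` independent for `i ∈ T`
and `Y i = x i` for `i ∉ T`; for `T = univ` it is the multilinear extension of `g` at `p`. -/
def bernoulliAvg (T : Finset (Fin n)) (g : (Fin n → ℝ) → ℝ) (x : Fin n → ℝ) : ℝ :=
  ∑ S ∈ T.powerset, g (fillIndicator T S x) * bernoulliWeight p T S

variable {p}

lemma bernoulliWeight_nonneg (hp : ∀ i, p i ∈ Set.Icc 0 1) (T S : Finset (Fin n)) :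
    0 ≤ bernoulliWeight p T S :=
  mul_nonneg (prod_nonneg fun i _ => (hp i).1) (prod_nonneg fun i _ => sub_nonneg.2 (hp i).2)

lemma sum_bernoulliWeight (T : Finset (Fin n)) :
    ∑ S ∈ T.powerset, bernoulliWeight p T S = 1 := by
  simpa [bernoulliWeight] using (prod_add p (fun i => 1 - p i) T).symm

lemma bernoulliWeight_insert {T S : Finset (Fin n)} {i : Fin n} (hiT : i ∉ T) (hiS : i ∉ S) :
    bernoulliWeight p (insert i T) S = (1 - p i) * bernoulliWeight p T S := by
  rw [bernoulliWeight, bernoulliWeight, insert_sdiff_of_notMem _ hiS,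
    prod_insert (by simp [hiT])]
  ring

lemma bernoulliWeight_insert_insert {T S : Finset (Fin n)} {i : Fin n} (hiT : i ∉ T)
    (hiS : i ∉ S) :
    bernoulliWeight p (insert i T) (insert i S) = p i * bernoulliWeight p T S := by
  rw [bernoulliWeight, bernoulliWeight, insert_sdiff_insert, sdiff_insert_of_notMem hiT,
    prod_insert hiS]
  ring

lemma fillIndicator_mem_boolCube (T S : Finset (Fin n)) {x : Fin n → ℝ}
    (hx : x ∈ boolCube n) : fillIndicator T S x ∈ boolCube n := by
  intro i
  unfold fillIndicator
  split_ifs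
  exacts [Or.inr rfl, Or.inl rfl, hx i]

lemma fillIndicator_mono (T S : Finset (Fin n)) {x y : Fin n → ℝ} (hxy : x ≤ y) :
    fillIndicator T S x ≤ fillIndicator T S y := by
  intro i
  unfold fillIndicator
  split_ifs
  exacts [le_rfl, le_rfl, hxy i]

lemma fillIndicator_update {T : Finset (Fin n)} (S : Finset (Fin n)) {i : Fin n} (hi : i ∉ T)
    (x : Fin n → ℝ) (c : ℝ) :
    fillIndicator T S (update x i c) = update (fillIndicator T S x) i c := by
  ext j
  rcases eq_or_ne j i with rfl | hj
  · simp [fillIndicator, hi]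
  · simp [fillIndicator, hj]

lemma fillIndicator_insert {T S : Finset (Fin n)} {i : Fin n} (hi : i ∉ S) (x : Fin n → ℝ) :
    fillIndicator (insert i T) S x = fillIndicator T S (update x i 0) := by
  ext j
  rcases eq_or_ne j i with rfl | hj
  · simp [fillIndicator, hi]
  · simp [fillIndicator, hj]

lemma fillIndicator_insert_insert {T : Finset (Fin n)} (S : Finset (Fin n)) {i : Fin n}
    (hi : i ∉ T) (x : Fin n → ℝ) :
    fillIndicator (insert i T) (insert i S) x = fillIndicator T S (update x i 1) := by
  ext j
  rcases eq_or_ne j i with rfl | hj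
  · simp [fillIndicator, hi]
  · simp [fillIndicator, hj]

lemma fillIndicator_univ (S : Finset (Fin n)) (x : Fin n → ℝ) :
    fillIndicator univ S x = fun i => if i ∈ S then 1 else 0 := by
  ext i
  simp [fillIndicator]

lemma measurable_fillIndicator (T S : Finset (Fin n)) :
    Measurable (fillIndicator T S) := by
  refine measurable_pi_lambda _ fun j => ?_
  by_cases hj : j ∈ T
  · simp [fillIndicator, hj]
  · simpa [fillIndicator, hj] using measurable_pi_apply j

lemma bernoulliAvg_empty (g : (Fin n → ℝ) → ℝ) (x : Fin n → ℝ) :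
    bernoulliAvg p ∅ g x = g x := by
  have : fillIndicator ∅ ∅ x = x := by ext i; simp [fillIndicator]
  simp [bernoulliAvg, bernoulliWeight, this]

lemma bernoulliAvg_insert {T : Finset (Fin n)} {i : Fin n} (hi : i ∉ T)
    (g : (Fin n → ℝ) → ℝ) (x : Fin n → ℝ) :
    bernoulliAvg p (insert i T) g x =
      (1 - p i) * bernoulliAvg p T g (update x i 0) +
        p i * bernoulliAvg p T g (update x i 1) := by
  rw [bernoulliAvg, sum_powerset_insert hi, bernoulliAvg, bernoulliAvg, mul_sum, mul_sum]
  congr 1 <;> refine sum_congr rfl fun S hS => ?_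
  · have hiS : i ∉ S := fun h => hi (mem_powerset.1 hS h)
    rw [bernoulliWeight_insert hi hiS, fillIndicator_insert hiS]
    ring
  · have hiS : i ∉ S := fun h => hi (mem_powerset.1 hS h)
    rw [bernoulliWeight_insert_insert hi hiS, fillIndicator_insert_insert S hi]
    ring

lemma bernoulliAvg_update {T : Finset (Fin n)} {i : Fin n} (hi : i ∉ T)
    (g : (Fin n → ℝ) → ℝ) (x : Fin n → ℝ) (c : ℝ) :
    bernoulliAvg p T g (update x i c) = bernoulliAvg p T (fun y => g (update y i c)) x := by
  simp only [bernoulliAvg, fillIndicator_update _ hi]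

lemma bernoulliAvg_const (T : Finset (Fin n)) (c : ℝ) (x : Fin n → ℝ) :
    bernoulliAvg p T (fun _ => c) x = c := by
  rw [bernoulliAvg, ← mul_sum, sum_bernoulliWeight, mul_one]

lemma bernoulliAvg_add (T : Finset (Fin n)) (g h : (Fin n → ℝ) → ℝ) (x : Fin n → ℝ) :
    bernoulliAvg p T (fun y => g y + h y) x = bernoulliAvg p T g x + bernoulliAvg p T h x := by
  simp only [bernoulliAvg, add_mul, sum_add_distrib]

lemma bernoulliAvg_sub (T : Finset (Fin n)) (g h : (Fin n → ℝ) → ℝ) (x : Fin n → ℝ) :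
    bernoulliAvg p T (fun y => g y - h y) x = bernoulliAvg p T g x - bernoulliAvg p T h x := by
  simp only [bernoulliAvg, sub_mul, sum_sub_distrib]

lemma bernoulliAvg_const_mul (T : Finset (Fin n)) (c : ℝ) (g : (Fin n → ℝ) → ℝ)
    (x : Fin n → ℝ) :
    bernoulliAvg p T (fun y => c * g y) x = c * bernoulliAvg p T g x := by
  simp only [bernoulliAvg, mul_sum, mul_assoc]

lemma bernoulliAvg_univ_eq (g : (Fin n → ℝ) → ℝ) (x y : Fin n → ℝ) :
    bernoulliAvg p univ g x = bernoulliAvg p univ g y := by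
  simp only [bernoulliAvg, fillIndicator_univ]

lemma bernoulliAvg_univ_eq_sum (g : (Fin n → ℝ) → ℝ) (x : Fin n → ℝ) :
    bernoulliAvg p univ g x = ∑ S : Finset (Fin n), g (fun i => if i ∈ S then 1 else 0) *
      ((∏ i ∈ S, p i) * ∏ i ∈ Sᶜ, (1 - p i)) := by
  rw [bernoulliAvg, powerset_univ]
  refine sum_congr rfl fun S _ => ?_
  rw [fillIndicator_univ, bernoulliWeight, compl_eq_univ_sdiff]

lemma marginal_bernoulliAvg {T : Finset (Fin n)} {i : Fin n} (hi : i ∉ T)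
    (g : (Fin n → ℝ) → ℝ) :
    marginal (bernoulliAvg p T g) i = bernoulliAvg p T (marginal g i) := by
  ext x
  rw [marginal, bernoulliAvg_update hi, bernoulliAvg_update hi, ← bernoulliAvg_sub]
  rfl

lemma measurable_bernoulliAvg {g : (Fin n → ℝ) → ℝ} (hg : Measurable g)
    (T : Finset (Fin n)) : Measurable (bernoulliAvg p T g) :=
  Finset.measurable_sum _ fun S _ => (hg.comp (measurable_fillIndicator T S)).mul_const _

lemma bernoulliAvg_le_bernoulliAvg (hp : ∀ i, p i ∈ Set.Icc 0 1) {T : Finset (Fin n)}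
    {g h : (Fin n → ℝ) → ℝ} {x y : Fin n → ℝ} (hgh : ∀ S, g (fillIndicator T S x) ≤ h (fillIndicator T S y)) :
    bernoulliAvg p T g x ≤ bernoulliAvg p T h y :=
  sum_le_sum fun S _ => mul_le_mul_of_nonneg_right (hgh S) (bernoulliWeight_nonneg hp T S)

lemma bernoulliAvg_mono (hp : ∀ i, p i ∈ Set.Icc 0 1) {T : Finset (Fin n)}
    {g h : (Fin n → ℝ) → ℝ} (hgh : ∀ y ∈ boolCube n, g y ≤ h y) {x : Fin n → ℝ}
    (hx : x ∈ boolCube n) : bernoulliAvg p T g x ≤ bernoulliAvg p T h x :=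
  bernoulliAvg_le_bernoulliAvg hp fun S => hgh _ (fillIndicator_mem_boolCube T S hx)

lemma MonotoneOn.bernoulliAvg (hp : ∀ i, p i ∈ Set.Icc 0 1) {g : (Fin n → ℝ) → ℝ}
    (hg : MonotoneOn g (boolCube n)) (T : Finset (Fin n)) :
    MonotoneOn (bernoulliAvg p T g) (boolCube n) := fun _ hx _ hy hxy =>
  bernoulliAvg_le_bernoulliAvg hp fun S => hg (fillIndicator_mem_boolCube T S hx)
    (fillIndicator_mem_boolCube T S hy) (fillIndicator_mono T S hxy)

lemma AntitoneOn.bernoulliAvg (hp : ∀ i, p i ∈ Set.Icc 0 1) {g : (Fin n → ℝ) → ℝ}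
    (hg : AntitoneOn g (boolCube n)) (T : Finset (Fin n)) :
    AntitoneOn (bernoulliAvg p T g) (boolCube n) := fun _ hx _ hy hxy =>
  bernoulliAvg_le_bernoulliAvg hp fun S => hg (fillIndicator_mem_boolCube T S hx)
    (fillIndicator_mem_boolCube T S hy) (fillIndicator_mono T S hxy)

lemma bernoulliAvg_nonneg (hp : ∀ i, p i ∈ Set.Icc 0 1) {T : Finset (Fin n)}
    {g : (Fin n → ℝ) → ℝ} (hg : ∀ y ∈ boolCube n, 0 ≤ g y) {x : Fin n → ℝ}
    (hx : x ∈ boolCube n) : 0 ≤ bernoulliAvg p T g x :=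
  bernoulliAvg_const (p := p) T 0 x ▸ bernoulliAvg_mono hp hg hx

/-- Harris' inequality for the product Bernoulli measure. -/
theorem bernoulliAvg_mul_le_of_antitoneOn (hp : ∀ i, p i ∈ Set.Icc 0 1)
    {u v : (Fin n → ℝ) → ℝ} (hu : AntitoneOn u (boolCube n))
    (hv : AntitoneOn v (boolCube n))
    (T : Finset (Fin n)) {x : Fin n → ℝ} (hx : x ∈ boolCube n) :
    bernoulliAvg p T u x * bernoulliAvg p T v x ≤ bernoulliAvg p T (fun y => u y * v y) x := by
  induction T using Finset.induction_on generalizing x with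
  | empty => simp only [bernoulliAvg_empty, le_refl]
  | @insert i T hi ih =>
    have hx0 := update_mem_boolCube hx i (Or.inl rfl)
    have hx1 := update_mem_boolCube hx i (Or.inr rfl)
    have hx01 : update x i 0 ≤ update x i 1 := update_le_update_iff'.2 zero_le_one
    simp only [bernoulliAvg_insert hi]
    have hu10 := (hu.bernoulliAvg hp T) hx0 hx1 hx01
    have hv10 := (hv.bernoulliAvg hp T) hx0 hx1 hx01
    have hpi := hp i
    -- with `Uₖ, Vₖ` the averages at `xᵢ = k`, the gap is the two inductive gaps plus
    -- `p i (1 - p i) (U₀ - U₁) (V₀ - V₁) ≥ 0`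
    nlinarith [mul_le_mul_of_nonneg_left (ih hx0) (sub_nonneg.2 hpi.2),
      mul_le_mul_of_nonneg_left (ih hx1) hpi.1, mul_nonneg (mul_nonneg hpi.1 (sub_nonneg.2 hpi.2))
      (mul_nonneg (sub_nonneg.2 hu10) (sub_nonneg.2 hv10))]

end BernoulliAverage

section ProductChernoff

variable {n : ℕ} {p : Fin n → ℝ} {f : (Fin n → ℝ) → ℝ} {t : ℝ}

lemma exp_neg_mul_le_one_add_mul {a : ℝ} (ha : a ∈ Set.Icc (0 : ℝ) 1) :
    exp (-(t * a)) ≤ 1 + a * (exp (-t) - 1) := by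
  have h := convexOn_exp.2 (Set.mem_univ 0) (Set.mem_univ (-t)) (sub_nonneg.2 ha.2) ha.1
    (sub_add_cancel 1 a)
  simp only [smul_eq_mul, mul_zero, zero_add, exp_zero, mul_one] at h
  rw [show -(t * a) = a * -t by ring]
  linarith

lemma supermodCube_exp_neg_mul (hmono : MonoCube f) (hsub : SubmodCube f) (ht : 0 ≤ t) :
    SupermodCube fun x => exp (-(t * f x)) := by
  intro i x y hx hy hxy
  have split : ∀ z, exp (-(t * f (update z i 1))) - exp (-(t * f (update z i 0))) =
      exp (-(t * f (update z i 0))) * (exp (-(t * marginal f i z)) - 1) := by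
    intro z
    rw [mul_sub, mul_one, ← exp_add, marginal]
    ring_nf
  simp only [split]
  have hfx0 : f (update x i 0) ≤ f (update y i 0) :=
    hmono _ _ (update_mem_boolCube hx i (Or.inl rfl)) (update_mem_boolCube hy i (Or.inl rfl))
      (update_le_update_iff.2 ⟨le_rfl, fun j _ => hxy j⟩)
  have hmy : 0 ≤ marginal f i y := sub_nonneg.2 <|
    hmono _ _ (update_mem_boolCube hy i (Or.inl rfl)) (update_mem_boolCube hy i (Or.inr rfl))
      (update_le_update_iff'.2 zero_le_one)
  have hmyx : marginal f i y ≤ marginal f i x := hsub i x y hx hy hxy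
  have he : exp (-(t * f (update y i 0))) ≤ exp (-(t * f (update x i 0))) :=
    exp_le_exp.2 (neg_le_neg (mul_le_mul_of_nonneg_left hfx0 ht))
  have hq : exp (-(t * marginal f i x)) ≤ exp (-(t * marginal f i y)) :=
    exp_le_exp.2 (neg_le_neg (mul_le_mul_of_nonneg_left hmyx ht))
  have hq1 : exp (-(t * marginal f i y)) ≤ 1 :=
    exp_le_one_iff.2 (neg_nonpos.2 (mul_nonneg ht hmy))
  calc exp (-(t * f (update x i 0))) * (exp (-(t * marginal f i x)) - 1)
      ≤ exp (-(t * f (update y i 0))) * (exp (-(t * marginal f i x)) - 1) :=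
        mul_le_mul_of_nonpos_right he (by linarith)
    _ ≤ exp (-(t * f (update y i 0))) * (exp (-(t * marginal f i y)) - 1) :=
        mul_le_mul_of_nonneg_left (by linarith) (exp_pos _).le

lemma bernoulliAvg_exp_neg_mul_update_one_le (hp : ∀ i, p i ∈ Set.Icc 0 1) (ht : 0 ≤ t)
    (hmono : MonoCube f) (hsub : SubmodCube f)
    (hmarg : ∀ i, ∀ x ∈ boolCube n, marginal f i x ∈ Set.Icc (0 : ℝ) 1)
    {T : Finset (Fin n)} {i : Fin n} (hi : i ∉ T) {z : Fin n → ℝ} (hz : z ∈ boolCube n) :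
    bernoulliAvg p T (fun x => exp (-(t * f x))) (update z i 1) ≤
      bernoulliAvg p T (fun x => exp (-(t * f x))) (update z i 0) *
        (1 + (exp (-t) - 1) * bernoulliAvg p T (marginal f i) z) := by
  set c := exp (-t) - 1
  have hc : c ≤ 0 := sub_nonpos.2 (exp_le_one_iff.2 (neg_nonpos.2 ht))
  set u : (Fin n → ℝ) → ℝ := fun y => exp (-(t * f (update y i 0)))
  have hu : AntitoneOn u (boolCube n) := fun y hy y' hy' hyy' =>
    exp_le_exp.2 <| neg_le_neg <| mul_le_mul_of_nonneg_left
      (hmono _ _ (update_mem_boolCube hy i (Or.inl rfl)) (update_mem_boolCube hy' i (Or.inl rfl))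
        (update_le_update_iff.2 ⟨le_rfl, fun j _ => hyy' j⟩)) ht
  have hchord : ∀ y ∈ boolCube n,
      exp (-(t * f (update y i 1))) ≤ u y + c * (u y * marginal f i y) := by
    intro y hy
    have hsplit : exp (-(t * f (update y i 1))) = u y * exp (-(t * marginal f i y)) := by
      rw [← exp_add, marginal]
      ring_nf
    rw [hsplit]
    nlinarith [mul_le_mul_of_nonneg_left (exp_neg_mul_le_one_add_mul (t := t) (hmarg i y hy))
      (exp_pos (-(t * f (update y i 0)))).le]
  calc bernoulliAvg p T (fun x => exp (-(t * f x))) (update z i 1)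
      = bernoulliAvg p T (fun y => exp (-(t * f (update y i 1)))) z := bernoulliAvg_update hi _ _ _
    _ ≤ bernoulliAvg p T (fun y => u y + c * (u y * marginal f i y)) z :=
        bernoulliAvg_mono hp hchord hz
    _ = bernoulliAvg p T u z + c * bernoulliAvg p T (fun y => u y * marginal f i y) z := by
        rw [bernoulliAvg_add, bernoulliAvg_const_mul]
    _ ≤ bernoulliAvg p T u z + c * (bernoulliAvg p T u z * bernoulliAvg p T (marginal f i) z) :=
        (add_le_add_iff_left _).2 (mul_le_mul_of_nonpos_left
          (bernoulliAvg_mul_le_of_antitoneOn hp hu (hsub.antitoneOn_marginal i) T hz) hc)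
    _ = _ := by rw [bernoulliAvg_update hi]; ring

theorem bernoulliAvg_exp_neg_mul_le (hp : ∀ i, p i ∈ Set.Icc 0 1) (ht : 0 ≤ t)
    (hf0 : ∀ x ∈ boolCube n, 0 ≤ f x) (hmono : MonoCube f) (hsub : SubmodCube f)
    (hmarg : ∀ i, ∀ x ∈ boolCube n, marginal f i x ∈ Set.Icc (0 : ℝ) 1)
    (T : Finset (Fin n)) {z : Fin n → ℝ} (hz : z ∈ boolCube n) :
    bernoulliAvg p T (fun x => exp (-(t * f x))) z ≤
      exp ((exp (-t) - 1) * bernoulliAvg p T f z) := by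
  induction T using Finset.induction_on generalizing z with
  | empty =>
    rw [bernoulliAvg_empty, bernoulliAvg_empty]
    exact exp_le_exp.2 (by nlinarith [add_one_le_exp (-t), hf0 z hz])
  | @insert i T hi ih =>
    have hz0 := update_mem_boolCube hz i (Or.inl rfl)
    set c := exp (-t) - 1
    set d := bernoulliAvg p T (marginal f i) z
    have hc : -1 ≤ c := by linarith [exp_pos (-t)]
    have hc0 : c ≤ 0 := sub_nonpos.2 (exp_le_one_iff.2 (neg_nonpos.2 ht))
    have hd : d = bernoulliAvg p T f (update z i 1) - bernoulliAvg p T f (update z i 0) := by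
      rw [← marginal, marginal_bernoulliAvg hi]
    have hd0 : 0 ≤ d := bernoulliAvg_nonneg hp (fun y hy => (hmarg i y hy).1) hz
    have hd1 : d ≤ 1 :=
      (bernoulliAvg_mono hp (fun y hy => (hmarg i y hy).2) hz).trans_eq (bernoulliAvg_const T 1 z)
    have hG0 : 0 ≤ bernoulliAvg p T (fun x => exp (-(t * f x))) (update z i 0) :=
      bernoulliAvg_nonneg hp (fun _ _ => (exp_pos _).le) hz0
    have hpi := hp i
    have hcd : -1 ≤ c * d := by nlinarith
    have hpcd : 0 ≤ 1 + p i * (c * d) := by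
      nlinarith [mul_nonneg (sub_nonneg.2 hpi.2)
        (neg_nonneg.2 (mul_nonpos_of_nonpos_of_nonneg hc0 hd0))]
    rw [bernoulliAvg_insert hi, bernoulliAvg_insert hi]
    calc (1 - p i) * bernoulliAvg p T (fun x => exp (-(t * f x))) (update z i 0) +
          p i * bernoulliAvg p T (fun x => exp (-(t * f x))) (update z i 1)
        ≤ bernoulliAvg p T (fun x => exp (-(t * f x))) (update z i 0) * (1 + p i * (c * d)) := by
          nlinarith [mul_le_mul_of_nonneg_left
            (bernoulliAvg_exp_neg_mul_update_one_le hp ht hmono hsub hmarg hi hz) hpi.1]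
      _ ≤ exp (c * bernoulliAvg p T f (update z i 0)) * exp (p i * (c * d)) :=
          mul_le_mul (ih hz0) (by linarith [add_one_le_exp (p i * (c * d))]) hpcd (exp_pos _).le
      _ = _ := by rw [← exp_add, hd]; ring_nf

end ProductChernoff

section NegativeAssociation

variable {Ω : Type*} [MeasurableSpace Ω] {μ : Measure Ω} {n : ℕ} {X : Fin n → Ω → ℝ}

lemma Measurable.marginal {g : (Fin n → ℝ) → ℝ} (hg : Measurable g) (i : Fin n) :
    Measurable (marginal g i) :=
  (hg.comp measurable_update_left).sub (hg.comp measurable_update_left)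

lemma integrable_comp_of_binary [IsFiniteMeasure μ] (hX : ∀ i, Measurable (X i))
    (hbin : ∀ i ω, X i ω = 0 ∨ X i ω = 1) {G : (Fin n → ℝ) → ℝ} (hG : Measurable G) :
    Integrable (fun ω => G (fun j => X j ω)) μ := by
  obtain ⟨C, hC⟩ := (boolCube_finite.image fun x => ‖G x‖).bddAbove
  exact Integrable.of_bound (hG.comp (measurable_pi_lambda _ hX)).aestronglyMeasurable C
    (Filter.Eventually.of_forall fun ω => hC ⟨_, fun i => hbin i ω, rfl⟩)

lemma integral_mem_Icc_of_binary [IsProbabilityMeasure μ] (hX : ∀ i, Measurable (X i))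
    (hbin : ∀ i ω, X i ω = 0 ∨ X i ω = 1) (i : Fin n) :
    ∫ ω, X i ω ∂μ ∈ Set.Icc 0 1 := by
  have hle : ∀ ω, X i ω ∈ Set.Icc 0 1 := fun ω => by rcases hbin i ω with h | h <;> simp [h]
  refine ⟨integral_nonneg fun ω => (hle ω).1, ?_⟩
  calc ∫ ω, X i ω ∂μ ≤ ∫ _, (1 : ℝ) ∂μ :=
        integral_mono (integrable_comp_of_binary hX hbin (measurable_pi_apply i))
          (integrable_const 1) fun ω => (hle ω).2
    _ = 1 := by simp

lemma integral_le_integral_resample [IsFiniteMeasure μ] (hX : ∀ i, Measurable (X i))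
    (hbin : ∀ i ω, X i ω = 0 ∨ X i ω = 1) (hNA : OneNA μ X) (i : Fin n)
    {h : (Fin n → ℝ) → ℝ} (hh : Measurable h)
    (hmarg : MonotoneOn (marginal h i) (boolCube n)) :
    ∫ ω, h (fun j => X j ω) ∂μ ≤
      ∫ ω, ((1 - ∫ ω, X i ω ∂μ) * h (update (fun j => X j ω) i 0) +
        (∫ ω, X i ω ∂μ) * h (update (fun j => X j ω) i 1)) ∂μ := by
  set q := ∫ ω, X i ω ∂μ
  have hint0 : Integrable (fun ω => h (update (fun j => X j ω) i 0)) μ :=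
    integrable_comp_of_binary hX hbin (hh.comp measurable_update_left)
  have hintF : Integrable (fun ω => marginal h i (fun j => X j ω)) μ :=
    integrable_comp_of_binary hX hbin (hh.marginal i)
  have hintFX : Integrable (fun ω => marginal h i (fun j => X j ω) * X i ω) μ :=
    integrable_comp_of_binary hX hbin ((hh.marginal i).mul (measurable_pi_apply i))
  have hcorr : ∫ ω, marginal h i (fun j => X j ω) * X i ω ∂μ ≤
      (∫ ω, marginal h i (fun j => X j ω) ∂μ) * q :=
    hNA i (marginal h i) id (hh.marginal i) (fun x y hx hy => hmarg hx hy)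
      (fun _ _ => marginal_eq_of_eq_off) measurable_id monotone_id
  have hsplit : ∀ ω, h (fun j => X j ω) =
      h (update (fun j => X j ω) i 0) + marginal h i (fun j => X j ω) * X i ω := by
    intro ω
    rcases hbin i ω with h0 | h1
    · have : update (fun j => X j ω) i 0 = fun j => X j ω := update_eq_self_iff.2 h0.symm
      rw [this, h0, mul_zero, add_zero]
    · have : update (fun j => X j ω) i 1 = fun j => X j ω := update_eq_self_iff.2 h1.symm
      rw [marginal, this, h1]
      ring
  have hresample : ∀ ω, (1 - q) * h (update (fun j => X j ω) i 0) +
      q * h (update (fun j => X j ω) i 1) =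
      h (update (fun j => X j ω) i 0) + q * marginal h i (fun j => X j ω) := by
    intro ω
    rw [marginal]
    ring
  simp only [hresample]
  rw [integral_congr_ae (Filter.Eventually.of_forall hsplit), integral_add hint0 hintFX,
    integral_add hint0 (hintF.const_mul q), integral_const_mul, mul_comm q]
  exact (add_le_add_iff_left _).2 hcorr

theorem integral_le_integral_bernoulliAvg [IsProbabilityMeasure μ] (hX : ∀ i, Measurable (X i))
    (hbin : ∀ i ω, X i ω = 0 ∨ X i ω = 1) (hNA : OneNA μ X) {g : (Fin n → ℝ) → ℝ}
    (hg : Measurable g) (hsup : SupermodCube g) (T : Finset (Fin n)) :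
    ∫ ω, g (fun j => X j ω) ∂μ ≤
      ∫ ω, bernoulliAvg (fun i => ∫ ω, X i ω ∂μ) T g (fun j => X j ω) ∂μ := by
  induction T using Finset.induction_on with
  | empty => simp only [bernoulliAvg_empty, le_refl]
  | @insert i T hi ih =>
    have hmarg : MonotoneOn (marginal (bernoulliAvg (fun i => ∫ ω, X i ω ∂μ) T g) i)
        (boolCube n) := by
      rw [marginal_bernoulliAvg hi]
      exact (hsup.monotoneOn_marginal i).bernoulliAvg (integral_mem_Icc_of_binary hX hbin) T
    refine ih.trans ((integral_le_integral_resample hX hbin hNA i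
      (measurable_bernoulliAvg hg T) hmarg).trans_eq ?_)
    simp only [bernoulliAvg_insert hi]

theorem integral_le_bernoulliAvg_univ [IsProbabilityMeasure μ] (hX : ∀ i, Measurable (X i))
    (hbin : ∀ i ω, X i ω = 0 ∨ X i ω = 1) (hNA : OneNA μ X) {g : (Fin n → ℝ) → ℝ}
    (hg : Measurable g) (hsup : SupermodCube g) (x : Fin n → ℝ) :
    ∫ ω, g (fun j => X j ω) ∂μ ≤
      bernoulliAvg (fun i => ∫ ω, X i ω ∂μ) univ g x := by
  refine (integral_le_integral_bernoulliAvg hX hbin hNA hg hsup univ).trans_eq ?_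
  simp only [bernoulliAvg_univ_eq _ _ x, integral_const, probReal_univ, one_smul]

end NegativeAssociation

lemma exp_neg_le_one_sub_add_sq_div_two {x : ℝ} (hx : 0 ≤ x) :
    exp (-x) ≤ 1 - x + x ^ 2 / 2 := by
  have hq : 0 < 1 - x + x ^ 2 / 2 := by nlinarith [sq_nonneg (x - 1)]
  rw [exp_neg, inv_le_iff_one_le_mul₀ (exp_pos x)]
  -- `(1 + x + x²/2)(1 - x + x²/2) = 1 + x⁴/4`
  nlinarith [mul_le_mul_of_nonneg_right (quadratic_le_exp_of_nonneg hx) hq.le, pow_nonneg hx 4]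

theorem submodular_chernoff_lower_tail_general {Ω : Type*} [MeasurableSpace Ω] (μ : Measure Ω)
    [IsProbabilityMeasure μ] {n : ℕ} (X : Fin n → Ω → ℝ)
    (hX : ∀ i, Measurable (X i)) (hbin : ∀ i ω, X i ω = 0 ∨ X i ω = 1)
    (hNA : OneNA μ X)
    (f : (Fin n → ℝ) → ℝ) (hfmeas : Measurable f)
    (hfnonneg : ∀ x, BinaryVec x → 0 ≤ f x)
    (hfmono : MonoCube f) (hfsub : SubmodCube f)
    (hmarg : ∀ (i : Fin n) (x : Fin n → ℝ), BinaryVec x →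
      f (Function.update x i 1) - f (Function.update x i 0) ∈ Set.Icc (0 : ℝ) 1)
    (μ0 : ℝ)
    (hμ0 : μ0 = ∑ S : Finset (Fin n), f (fun i => if i ∈ S then 1 else 0) *
      ((∏ i ∈ S, ∫ ω, X i ω ∂μ) * ∏ i ∈ Sᶜ, (1 - ∫ ω, X i ω ∂μ)))
    (δ : ℝ) (hδ0 : 0 < δ) :
    (μ {ω | f (fun j => X j ω) ≤ (1 - δ) * μ0}).toReal ≤ Real.exp (-(μ0 * δ ^ 2 / 2)) := by
  set p : Fin n → ℝ := fun i => ∫ ω, X i ω ∂μ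
  have hp : ∀ i, p i ∈ Set.Icc 0 1 := integral_mem_Icc_of_binary hX hbin
  have hμ0_eq : μ0 = bernoulliAvg p univ f 0 := hμ0.trans (bernoulliAvg_univ_eq_sum f 0).symm
  have hμ0_nonneg : 0 ≤ μ0 := hμ0_eq ▸ bernoulliAvg_nonneg hp hfnonneg fun _ => Or.inl rfl
  have hexp_meas : Measurable fun x => exp (-(δ * f x)) := (hfmeas.const_mul δ).neg.exp
  have hmgf : mgf (fun ω => f (fun j => X j ω)) μ (-δ) ≤ exp ((exp (-δ) - 1) * μ0) := by
    rw [hμ0_eq]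
    calc mgf (fun ω => f (fun j => X j ω)) μ (-δ)
        = ∫ ω, exp (-(δ * f (fun j => X j ω))) ∂μ := by simp only [mgf, neg_mul]
      _ ≤ bernoulliAvg p univ (fun x => exp (-(δ * f x))) 0 :=
          integral_le_bernoulliAvg_univ hX hbin hNA hexp_meas
            (supermodCube_exp_neg_mul hfmono hfsub hδ0.le) 0
      _ ≤ _ := bernoulliAvg_exp_neg_mul_le hp hδ0.le hfnonneg hfmono hfsub hmarg univ
          fun _ => Or.inl rfl
  calc (μ {ω | f (fun j => X j ω) ≤ (1 - δ) * μ0}).toReal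
      ≤ exp (-(-δ) * ((1 - δ) * μ0)) * mgf (fun ω => f (fun j => X j ω)) μ (-δ) :=
        measure_le_le_exp_mul_mgf _ (neg_nonpos.2 hδ0.le) <| by
          simpa only [neg_mul] using integrable_comp_of_binary hX hbin hexp_meas
    _ ≤ exp (-(-δ) * ((1 - δ) * μ0)) * exp ((exp (-δ) - 1) * μ0) :=
        mul_le_mul_of_nonneg_left hmgf (exp_pos _).le
    _ ≤ exp (-(μ0 * δ ^ 2 / 2)) := by
        rw [← exp_add]
        exact exp_le_exp.2 (by nlinarith [exp_neg_le_one_sub_add_sq_div_two hδ0.le])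

/-- Lower-tail Chernoff bound for monotone submodular functions of binary
1-negatively associated random variables, with respect to the multilinear extension
evaluated at the means. -/
theorem submodular_chernoff_lower_tail {Ω : Type*} [MeasurableSpace Ω] (μ : Measure Ω)
    [IsProbabilityMeasure μ] {n : ℕ} (X : Fin n → Ω → ℝ)
    (hX : ∀ i, Measurable (X i)) (hbin : ∀ i ω, X i ω = 0 ∨ X i ω = 1)
    (hNA : OneNA μ X)
    (f : (Fin n → ℝ) → ℝ) (hfmeas : Measurable f)
    (hfnonneg : ∀ x, BinaryVec x → 0 ≤ f x)
    (hfmono : MonoCube f) (hfsub : SubmodCube f)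
    (hmarg : ∀ (i : Fin n) (x : Fin n → ℝ), BinaryVec x →
      f (Function.update x i 1) - f (Function.update x i 0) ∈ Set.Icc (0 : ℝ) 1)
    (μ0 : ℝ)
    (hμ0 : μ0 = ∑ S : Finset (Fin n), f (fun i => if i ∈ S then 1 else 0) *
      ((∏ i ∈ S, ∫ ω, X i ω ∂μ) * ∏ i ∈ Sᶜ, (1 - ∫ ω, X i ω ∂μ)))
    (δ : ℝ) (hδ0 : 0 < δ) (hδ1 : δ ≤ 1) :
    (μ {ω | f (fun j => X j ω) ≤ (1 - δ) * μ0}).toReal ≤ Real.exp (-(μ0 * δ ^ 2 / 2)) :=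
  submodular_chernoff_lower_tail_general μ X hX hbin hNA f hfmeas hfnonneg hfmono hfsub hmarg μ0 hμ0
    δ hδ0
end

section
/- Generalized Hölder / read-k inequality: Let X_1,...,X_m be mutually independent random variables and let F_1,...,F_n be non-negative random variables forming a read-k family, i.e., each F_j is a function of X_{P_j} for some P_j ⊆ [m] and each index i ∈ [m] belongs to at most k of the sets P_j. Then E[Π_{j=1}^n F_j] ≤ (Π_{j=1}^n E[F_j^k])^{1/k}. -/
/-!
Transport the problem to the product space `∏ i, law(X i)`, where independence makes the joint
law a product measure, and integrate out one coordinate at a time. Inductively, once the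
coordinates in a set `s` have been integrated out, the marginal of `∏ j, g j` is bounded by
`∏ j, (marginal of g j ^ k) ^ (1/k)`. When a further coordinate `i` is integrated out, only the
at most `k` factors with `i ∈ P j` vary with `x i`, and Hölder's inequality with exponents `1/k`
(total at most one, on a probability space) propagates the bound.
-/

open MeasureTheory ProbabilityTheory Finset ENNReal Function

namespace ENNReal

variable {α : Type*} [MeasurableSpace α] {μ : Measure α} [IsProbabilityMeasure μ]

theorem lintegral_prod_rpow_le_of_sum_le_one {ι : Type*} (s : Finset ι) {f : ι → α → ℝ≥0∞}
    (hf : ∀ i ∈ s, AEMeasurable (f i) μ) {p : ι → ℝ} (hp : ∑ i ∈ s, p i ≤ 1)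
    (h2p : ∀ i ∈ s, 0 ≤ p i) :
    ∫⁻ a, ∏ i ∈ s, f i a ^ p i ∂μ ≤ ∏ i ∈ s, (∫⁻ a, f i a ∂μ) ^ p i := by
  simpa using lintegral_mul_prod_norm_pow_le s (g := fun _ => 1) aemeasurable_const hf
    (1 - ∑ i ∈ s, p i) (sub_add_cancel _ _) (sub_nonneg.2 hp) h2p

theorem lintegral_prod_le_prod_lintegral_pow_rpow {J : Type*} [Fintype J] {k : ℕ} (hk : k ≠ 0)
    {f : J → α → ℝ≥0∞} (hf : ∀ j, Measurable (f j)) (S : Finset J) (hS : #S ≤ k)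
    (hconst : ∀ j ∉ S, ∀ a b, f j a = f j b) :
    ∫⁻ a, ∏ j, f j a ∂μ ≤ ∏ j, (∫⁻ a, f j a ^ k ∂μ) ^ (k⁻¹ : ℝ) := by
  classical
  obtain ⟨a₀⟩ := nonempty_of_isProbabilityMeasure μ
  have hconst_norm : ∀ j ∉ S, (∫⁻ a, f j a ^ k ∂μ) ^ (k⁻¹ : ℝ) = f j a₀ := fun j hj => by
    simp_rw [hconst j hj _ a₀, lintegral_const, measure_univ, mul_one, pow_rpow_inv_natCast hk]
  have holder : ∫⁻ a, ∏ j ∈ S, f j a ∂μ ≤ ∏ j ∈ S, (∫⁻ a, f j a ^ k ∂μ) ^ (k⁻¹ : ℝ) := by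
    have hexp : ∑ _j ∈ S, (k⁻¹ : ℝ) ≤ 1 := by
      rw [sum_const, nsmul_eq_mul, ← div_eq_mul_inv]
      exact div_le_one_of_le₀ (by exact_mod_cast hS) k.cast_nonneg
    simpa only [pow_rpow_inv_natCast hk] using lintegral_prod_rpow_le_of_sum_le_one S
      (fun j _ => ((hf j).pow_const k).aemeasurable) hexp (fun _ _ => by positivity)
  calc ∫⁻ a, ∏ j, f j a ∂μ = ∫⁻ a, (∏ j ∈ S, f j a) * ∏ j ∈ Sᶜ, f j a₀ ∂μ := by
        refine lintegral_congr fun a => ?_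
        rw [← prod_mul_prod_compl S]
        exact congrArg _ (prod_congr rfl fun j hj => hconst j (mem_compl.1 hj) a a₀)
    _ = (∫⁻ a, ∏ j ∈ S, f j a ∂μ) * ∏ j ∈ Sᶜ, f j a₀ :=
        lintegral_mul_const _ (S.measurable_prod fun j _ => hf j)
    _ ≤ (∏ j ∈ S, (∫⁻ a, f j a ^ k ∂μ) ^ (k⁻¹ : ℝ)) * ∏ j ∈ Sᶜ, f j a₀ := by gcongr
    _ = ∏ j, (∫⁻ a, f j a ^ k ∂μ) ^ (k⁻¹ : ℝ) := by
        rw [← prod_mul_prod_compl S]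
        exact congrArg _ (prod_congr rfl fun j hj => (hconst_norm j (mem_compl.1 hj)).symm)

end ENNReal

namespace MeasureTheory

variable {ι : Type*} [DecidableEq ι] {X : ι → Type*} [∀ i, MeasurableSpace (X i)]
  {μ : ∀ i, Measure (X i)}

theorem _root_.DependsOn.lmarginal_update_of_notMem [∀ i, SigmaFinite (μ i)]
    {f : (∀ i, X i) → ℝ≥0∞} {s : Finset ι} {t : Set ι} {i : ι} (hf : DependsOn f t)
    (hmf : Measurable f) (hs : i ∉ s) (ht : i ∉ t) (x : ∀ i, X i) (y : X i) :
    (∫⋯∫⁻_s, f ∂μ) (update x i y) = (∫⋯∫⁻_s, f ∂μ) x := by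
  rw [MeasureTheory.lmarginal_update_of_notMem hmf hs]
  have hf_update : f ∘ (update · i y) = f :=
    funext fun z => hf fun l hl => update_of_ne (ne_of_mem_of_not_mem hl ht) y z
  rw [hf_update]

variable [∀ i, IsProbabilityMeasure (μ i)] {J : Type*} [Fintype J] {k : ℕ} {P : J → Finset ι}
  {g : J → (∀ i, X i) → ℝ≥0∞}

theorem lmarginal_prod_le_prod_lmarginal_pow_rpow (hk : k ≠ 0)
    (hread : ∀ i, #{j | i ∈ P j} ≤ k) (hg : ∀ j, Measurable (g j))
    (hdep : ∀ j, DependsOn (g j) (P j)) (s : Finset ι) (x : ∀ i, X i) :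
    (∫⋯∫⁻_s, (fun y => ∏ j, g j y) ∂μ) x
      ≤ ∏ j, (∫⋯∫⁻_s, (fun y => g j y ^ k) ∂μ) x ^ (k⁻¹ : ℝ) := by
  induction s using Finset.induction generalizing x with
  | empty => simp [pow_rpow_inv_natCast hk]
  | insert i s hi ih =>
    set G : J → (∀ i, X i) → ℝ≥0∞ := fun j y => (∫⋯∫⁻_s, (fun y => g j y ^ k) ∂μ) y ^ (k⁻¹ : ℝ)
    have hGm : ∀ j, Measurable (G j) := fun j => (((hg j).pow_const k).lmarginal μ).pow_const _
    have hG_update : ∀ j, i ∉ P j → ∀ t, G j (update x i t) = G j x := fun j hj t => by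
      simp only [G]
      rw [DependsOn.lmarginal_update_of_notMem (fun y z h => by rw [hdep j h])
        ((hg j).pow_const k) hi hj]
    calc (∫⋯∫⁻_insert i s, (fun y => ∏ j, g j y) ∂μ) x
        = ∫⁻ t, (∫⋯∫⁻_s, (fun y => ∏ j, g j y) ∂μ) (update x i t) ∂μ i :=
          lmarginal_insert _ (univ.measurable_prod fun j _ => hg j) hi x
      _ ≤ ∫⁻ t, ∏ j, G j (update x i t) ∂μ i := lintegral_mono fun t => ih _
      _ ≤ ∏ j, (∫⁻ t, G j (update x i t) ^ k ∂μ i) ^ (k⁻¹ : ℝ) :=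
          ENNReal.lintegral_prod_le_prod_lintegral_pow_rpow hk
            (fun j => (hGm j).comp (measurable_update x)) {j | i ∈ P j} (hread i)
            fun j hj t t' => by
              simp only [mem_filter, mem_univ, true_and] at hj
              rw [hG_update j hj, hG_update j hj]
      _ = ∏ j, (∫⋯∫⁻_insert i s, (fun y => g j y ^ k) ∂μ) x ^ (k⁻¹ : ℝ) := by
          simp_rw [G, rpow_inv_natCast_pow hk, lmarginal_insert _ ((hg _).pow_const k) hi]

theorem lintegral_pi_prod_le_prod_lintegral_pow_rpow [Fintype ι] (hk : k ≠ 0)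
    (hread : ∀ i, #{j | i ∈ P j} ≤ k) (hg : ∀ j, Measurable (g j))
    (hdep : ∀ j, DependsOn (g j) (P j)) :
    ∫⁻ x, ∏ j, g j x ∂Measure.pi μ ≤ ∏ j, (∫⁻ x, g j x ^ k ∂Measure.pi μ) ^ (k⁻¹ : ℝ) := by
  obtain ⟨x⟩ := nonempty_of_isProbabilityMeasure (Measure.pi μ)
  simpa only [← lintegral_eq_lmarginal_univ x]
    using lmarginal_prod_le_prod_lmarginal_pow_rpow (μ := μ) hk hread hg hdep univ x

end MeasureTheory

namespace ProbabilityTheory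

variable {Ω : Type*} [MeasurableSpace Ω] {μ : Measure Ω} {ι : Type*} [Fintype ι] [DecidableEq ι]
  {β : ι → Type*} [∀ i, MeasurableSpace (β i)] {X : ∀ i, Ω → β i} {J : Type*} [Fintype J]
  {k : ℕ} {P : J → Finset ι}

theorem iIndepFun.lintegral_prod_le_prod_lintegral_pow_rpow (hindep : iIndepFun X μ)
    (hX : ∀ i, Measurable (X i)) (hk : k ≠ 0) (hread : ∀ i, #{j | i ∈ P j} ≤ k)
    {g : J → (∀ i, β i) → ℝ≥0∞} (hg : ∀ j, Measurable (g j))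
    (hdep : ∀ j, DependsOn (g j) (P j)) :
    ∫⁻ ω, ∏ j, g j (fun i => X i ω) ∂μ
      ≤ ∏ j, (∫⁻ ω, g j (fun i => X i ω) ^ k ∂μ) ^ (k⁻¹ : ℝ) := by
  have := hindep.isProbabilityMeasure
  have hlaw := hindep.map_fun_eq_pi_map fun i => (hX i).aemeasurable
  have hXm : Measurable fun ω i => X i ω := measurable_pi_lambda _ hX
  have : ∀ i, IsProbabilityMeasure (μ.map (X i)) :=
    fun i => Measure.isProbabilityMeasure_map (hX i).aemeasurable
  simp_rw [← lintegral_map (univ.measurable_prod fun j _ => hg j) hXm,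
    ← lintegral_map ((hg _).pow_const k) hXm, hlaw]
  exact lintegral_pi_prod_le_prod_lintegral_pow_rpow hk hread hg hdep

theorem iIndepFun.integral_prod_le_prod_integral_pow_rpow (hindep : iIndepFun X μ)
    (hX : ∀ i, Measurable (X i)) (hk : k ≠ 0) (hread : ∀ i, #{j | i ∈ P j} ≤ k)
    {g : J → (∀ i, β i) → ℝ} (hg : ∀ j, Measurable (g j))
    (hdep : ∀ j, DependsOn (g j) (P j)) (hnonneg : ∀ j ω, 0 ≤ g j (fun i => X i ω))
    (hint : ∀ j, Integrable (fun ω => g j (fun i => X i ω) ^ k) μ) :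
    ∫ ω, ∏ j, g j (fun i => X i ω) ∂μ
      ≤ (∏ j, ∫ ω, g j (fun i => X i ω) ^ k ∂μ) ^ (k⁻¹ : ℝ) := by
  have hXm : Measurable fun ω i => X i ω := measurable_pi_lambda _ hX
  have hlintegral := hindep.lintegral_prod_le_prod_lintegral_pow_rpow hX hk hread
    (fun j => ENNReal.measurable_ofReal.comp (hg j))
    (fun j x y hxy => congrArg ENNReal.ofReal (hdep j hxy))
  rw [integral_eq_lintegral_of_nonneg_ae
    (.of_forall fun ω => prod_nonneg fun j _ => hnonneg j ω)
    (univ.measurable_prod fun j _ => (hg j).comp hXm).aestronglyMeasurable]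
  have hint_nonneg : ∀ j, 0 ≤ ∫ ω, g j (fun i => X i ω) ^ k ∂μ :=
    fun j => integral_nonneg fun ω => pow_nonneg (hnonneg j ω) k
  have hlintegral_pow : ∀ j, ∫⁻ ω, ENNReal.ofReal (g j fun i => X i ω) ^ k ∂μ
      = ENNReal.ofReal (∫ ω, g j (fun i => X i ω) ^ k ∂μ) := fun j => by
    rw [ofReal_integral_eq_lintegral_ofReal (hint j)
      (.of_forall fun ω => pow_nonneg (hnonneg j ω) k)]
    exact lintegral_congr fun ω => (ENNReal.ofReal_pow (hnonneg j ω) k).symm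
  refine ENNReal.toReal_le_of_le_ofReal
    (Real.rpow_nonneg (prod_nonneg fun j _ => hint_nonneg j) _) ?_
  calc ∫⁻ ω, ENNReal.ofReal (∏ j, g j fun i => X i ω) ∂μ
      = ∫⁻ ω, ∏ j, ENNReal.ofReal (g j fun i => X i ω) ∂μ := by
        simp_rw [ENNReal.ofReal_prod_of_nonneg fun j _ => hnonneg j _]
    _ ≤ ∏ j, (∫⁻ ω, ENNReal.ofReal (g j fun i => X i ω) ^ k ∂μ) ^ (k⁻¹ : ℝ) := hlintegral
    _ = ∏ j, ENNReal.ofReal ((∫ ω, g j (fun i => X i ω) ^ k ∂μ) ^ (k⁻¹ : ℝ)) :=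
        prod_congr rfl fun j _ => by
          rw [hlintegral_pow j, ENNReal.ofReal_rpow_of_nonneg (hint_nonneg j) (by positivity)]
    _ = ENNReal.ofReal ((∏ j, ∫ ω, g j (fun i => X i ω) ^ k ∂μ) ^ (k⁻¹ : ℝ)) := by
        rw [← ENNReal.ofReal_prod_of_nonneg fun j _ => Real.rpow_nonneg (hint_nonneg j) _,
          Real.finsetProd_rpow _ _ fun j _ => hint_nonneg j]

end ProbabilityTheory

/-- Read-k generalized Hölder inequality: if X₁,...,X_m are independent and
F₁,...,F_n are non-negative bounded functions forming a read-k family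
(F_j depends only on the variables indexed by P j, and each i lies in at most k
of the sets P j), then E[∏ F_j] ≤ (∏ E[F_j^k])^{1/k}. -/
theorem read_k_holder {Ω : Type*} [MeasurableSpace Ω] (μ : Measure Ω)
    [IsProbabilityMeasure μ] {m n k : ℕ} (hk : 0 < k)
    (X : Fin m → Ω → ℝ) (hX : ∀ i, Measurable (X i))
    (hindep : iIndepFun X μ)
    (P : Fin n → Finset (Fin m))
    (hread : ∀ i : Fin m, (Finset.univ.filter fun j => i ∈ P j).card ≤ k)
    (φ : ∀ j : Fin n, ({i // i ∈ P j} → ℝ) → ℝ) (hφ : ∀ j, Measurable (φ j))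
    (F : Fin n → Ω → ℝ)
    (hFrep : ∀ j ω, F j ω = φ j (fun i => X i.1 ω))
    (hFnonneg : ∀ j ω, 0 ≤ F j ω)
    (hFbdd : ∀ j, ∃ C, ∀ ω, F j ω ≤ C) :
    ∫ ω, ∏ j, F j ω ∂μ ≤ (∏ j, ∫ ω, (F j ω) ^ k ∂μ) ^ ((1 : ℝ) / k) := by
  set g : Fin n → (Fin m → ℝ) → ℝ := fun j x => φ j fun i => x i.1
  have hg : ∀ j, Measurable (g j) := fun j =>
    (hφ j).comp (measurable_pi_lambda _ fun i => measurable_pi_apply i.1)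
  have hdep : ∀ j, DependsOn (g j) (P j) := fun j x y hxy => by
    simp only [g]
    congr 1 with i
    exact hxy i.1 i.2
  have hF : F = fun j ω => g j fun i => X i ω := funext fun j => funext (hFrep j)
  subst hF
  have hint : ∀ j, Integrable (fun ω => g j (fun i => X i ω) ^ k) μ := fun j => by
    obtain ⟨C, hC⟩ := hFbdd j
    refine .of_bound (((hg j).comp (measurable_pi_lambda _ hX)).pow_const k).aestronglyMeasurable
      (C ^ k) (.of_forall fun ω => ?_)
    rw [Real.norm_of_nonneg (pow_nonneg (hFnonneg j ω) k)]
    exact pow_le_pow_left₀ (hFnonneg j ω) (hC ω) k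
  rw [one_div]
  exact hindep.integral_prod_le_prod_integral_pow_rpow hX hk.ne' hread hg hdep hFnonneg hint
end
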